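/- For any partitions μ ⊆ λ fitting in the k×(n−k) rectangle, each member I_{λ/μ,r} of the tuple I_{λ/μ} is a k-element subset of {1,…,n}, and the tuple I_{λ/μ} = (I_{λ/μ,1},…,I_{λ/μ,n}) is a (k,n)-source Grassmann necklace. -/
import Mathlib


/-- The height `λ̄_a` of the `a`-th column (counted from the right) of the
partition `f = (f 1 ≥ ⋯ ≥ f k)` inside the `k × (n-k)` rectangle. -/
def colHeight (n k : ℕ) (f : ℕ → ℕ) (a : ℕ) : ℕ :=
  ((Finset.Icc 1 k).filter (fun i => n - k - a + 1 ≤ f i)).card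

/-- `b_i = n - k - μ_i + i`. -/
def bvec (n k : ℕ) (m : ℕ → ℕ) (i : ℕ) : ℕ := n - k - m i + i

/-- The short label `J(a,i) = {min (a+j-1) (b_j) : j = 1, …, i}`. -/
def shortLabel (n k : ℕ) (m : ℕ → ℕ) (a i : ℕ) : Finset ℕ :=
  (Finset.Icc 1 i).image (fun j => min (a + j - 1) (bvec n k m j))

/-- The label `I'(a,i) = J(a,i) ∪ {b_{i+1}, …, b_k}`. -/
def fullLabel (n k : ℕ) (m : ℕ → ℕ) (a i : ℕ) : Finset ℕ :=
  shortLabel n k m a i ∪ (Finset.Icc (i + 1) k).image (bvec n k m)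

/-- `I_μ = {b_1, …, b_k}`. -/
def Imu (n k : ℕ) (m : ℕ → ℕ) : Finset ℕ := (Finset.Icc 1 k).image (bvec n k m)

/-- The box `(a,i)` belongs to the skew diagram `λ/μ`. -/
def InSkew (n k : ℕ) (l m : ℕ → ℕ) (a i : ℕ) : Prop :=
  1 ≤ a ∧ a ≤ n - k ∧ 1 ≤ i ∧ i ≤ k ∧ colHeight n k m a < i ∧ i ≤ colHeight n k l a

/-- The box `(a,i)` belongs to the boundary ribbon `R(λ/μ)`. -/
def InRibbon (n k : ℕ) (l m : ℕ → ℕ) (a i : ℕ) : Prop :=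
  InSkew n k l m a i ∧ (a = 1 ∨ colHeight n k l (a - 1) ≤ i)

/-- A `(k,n)`-source Grassmann necklace, encoded as an `n`-periodic function
`I : ℕ → Finset ℕ` (the entries `I 1, …, I n` form the necklace, and
periodicity provides the convention `I 0 = I n`). -/
def IsSourceGN (n k : ℕ) (I : ℕ → Finset ℕ) : Prop :=
  (∀ r, I (r + n) = I r) ∧
  (∀ r ∈ Finset.Icc 1 n, (I r).card = k ∧ I r ⊆ Finset.Icc 1 n) ∧
  (∀ i ∈ Finset.Icc 1 n,
    (i ∈ I i → ∃ j ∈ Finset.Icc 1 n, I (i - 1) = insert j (I i \ {i})) ∧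
    (i ∉ I i → I (i - 1) = I i))

section Aux

variable {n k : ℕ} {m f : ℕ → ℕ}

lemma bvec_lt_bvec (hmono : ∀ i j, 1 ≤ i → i ≤ j → j ≤ k → m j ≤ m i)
    {i j : ℕ} (h1 : 1 ≤ i) (hij : i < j) (hjk : j ≤ k) :
    bvec n k m i < bvec n k m j := by
  have h := hmono i j h1 (le_of_lt hij) hjk
  unfold bvec
  omega

lemma one_le_bvec {j : ℕ} (h : 1 ≤ j) : 1 ≤ bvec n k m j := by
  unfold bvec; omega

lemma bvec_le_n {j : ℕ} (h : j ≤ k) (hkn : k ≤ n) : bvec n k m j ≤ n := by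
  unfold bvec; omega

lemma le_colHeight_iff (hmono : ∀ i j, 1 ≤ i → i ≤ j → j ≤ k → f j ≤ f i)
    {a j : ℕ} (hj1 : 1 ≤ j) (hjk : j ≤ k) :
    j ≤ colHeight n k f a ↔ n - k - a + 1 ≤ f j := by
  unfold colHeight
  constructor
  · intro h
    by_contra hc
    push_neg at hc
    have hsub : (Finset.Icc 1 k).filter (fun i => n - k - a + 1 ≤ f i)
        ⊆ Finset.Icc 1 (j - 1) := by
      intro x hx
      simp only [Finset.mem_filter, Finset.mem_Icc] at hx ⊢
      refine ⟨hx.1.1, ?_⟩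
      by_contra hxj
      push_neg at hxj
      have hjx : j ≤ x := by omega
      have := hmono j x hj1 hjx hx.1.2
      omega
    have := Finset.card_le_card hsub
    simp only [Nat.card_Icc] at this
    omega
  · intro h
    have hsub : Finset.Icc 1 j ⊆ (Finset.Icc 1 k).filter (fun i => n - k - a + 1 ≤ f i) := by
      intro x hx
      simp only [Finset.mem_Icc, Finset.mem_filter] at hx ⊢
      exact ⟨⟨hx.1, le_trans hx.2 hjk⟩, le_trans h (hmono x j hx.1 hx.2 hjk)⟩
    have := Finset.card_le_card hsub
    simpa [Nat.card_Icc] using this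

lemma colHeight_le_k {a : ℕ} : colHeight n k f a ≤ k := by
  unfold colHeight
  calc ((Finset.Icc 1 k).filter _).card ≤ (Finset.Icc 1 k).card := Finset.card_filter_le _ _
    _ = k := by simp [Nat.card_Icc]

lemma colHeight_mono {a a' : ℕ} (h : a ≤ a') : colHeight n k f a ≤ colHeight n k f a' := by
  unfold colHeight
  apply Finset.card_le_card
  intro x hx
  simp only [Finset.mem_filter, Finset.mem_Icc] at hx ⊢
  exact ⟨hx.1, by omega⟩

lemma colHeight_le_colHeight {l : ℕ → ℕ} (hml : ∀ i, 1 ≤ i → i ≤ k → m i ≤ l i) (a : ℕ) :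
    colHeight n k m a ≤ colHeight n k l a := by
  unfold colHeight
  apply Finset.card_le_card
  intro x hx
  simp only [Finset.mem_filter, Finset.mem_Icc] at hx ⊢
  have := hml x hx.1.1 hx.1.2
  exact ⟨hx.1, by omega⟩

end Aux

section Mem

variable {n k : ℕ} {m : ℕ → ℕ}

lemma mem_Imu {x : ℕ} :
    x ∈ Imu n k m ↔ ∃ j, 1 ≤ j ∧ j ≤ k ∧ bvec n k m j = x := by
  unfold Imu
  simp only [Finset.mem_image, Finset.mem_Icc]
  constructor
  · rintro ⟨j, ⟨h1, h2⟩, h3⟩; exact ⟨j, h1, h2, h3⟩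
  · rintro ⟨j, h1, h2, h3⟩; exact ⟨j, ⟨h1, h2⟩, h3⟩

lemma mem_fullLabel (hmono : ∀ i j, 1 ≤ i → i ≤ j → j ≤ k → m j ≤ m i)
    {a i x : ℕ} (ha1 : 1 ≤ a) (han : a ≤ n - k)
    (hci : colHeight n k m a < i) (hik : i ≤ k) :
    x ∈ fullLabel n k m a i ↔
      (∃ j, 1 ≤ j ∧ j ≤ colHeight n k m a ∧ bvec n k m j = x) ∨
      (a + colHeight n k m a ≤ x ∧ x ≤ a + i - 1) ∨
      (∃ j, i + 1 ≤ j ∧ j ≤ k ∧ bvec n k m j = x) := by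
  set c := colHeight n k m a with hc
  have hck : c ≤ k := colHeight_le_k
  have hb_le : ∀ j, 1 ≤ j → j ≤ c → bvec n k m j + 1 ≤ a + j := by
    intro j h1 h2
    have hm : n - k - a + 1 ≤ m j := (le_colHeight_iff hmono h1 (h2.trans hck)).1 h2
    unfold bvec; omega
  have hb_ge : ∀ j, c < j → j ≤ k → a + j ≤ bvec n k m j := by
    intro j h1 h2
    have hm : ¬ (n - k - a + 1 ≤ m j) := by
      intro h
      exact absurd ((le_colHeight_iff hmono (by omega) h2).2 h) (by omega)
    unfold bvec; omega
  unfold fullLabel shortLabel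
  simp only [Finset.mem_union, Finset.mem_image, Finset.mem_Icc]
  constructor
  · rintro (⟨j, ⟨hj1, hji⟩, rfl⟩ | ⟨j, ⟨hj1, hjk'⟩, h3⟩)
    · by_cases hjc : j ≤ c
      · left
        have := hb_le j hj1 hjc
        have hmin : min (a + j - 1) (bvec n k m j) = bvec n k m j := min_eq_right (by omega)
        exact ⟨j, hj1, hjc, hmin.symm⟩
      · right; left
        have := hb_ge j (by omega) (le_trans hji hik)
        have hmin : min (a + j - 1) (bvec n k m j) = a + j - 1 := min_eq_left (by omega)
        rw [hmin]
        omega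
    · right; right; exact ⟨j, hj1, hjk', h3⟩
  · rintro (⟨j, hj1, hjc, rfl⟩ | ⟨hx1, hx2⟩ | ⟨j, hj1, hjk', h3⟩)
    · left
      refine ⟨j, ⟨hj1, by omega⟩, ?_⟩
      have := hb_le j hj1 hjc
      exact min_eq_right (by omega)
    · left
      refine ⟨x - a + 1, ⟨by omega, by omega⟩, ?_⟩
      have := hb_ge (x - a + 1) (by omega) (by omega)
      have hmin : min (a + (x - a + 1) - 1) (bvec n k m (x - a + 1)) = a + (x - a + 1) - 1 :=
        min_eq_left (by omega)
      rw [hmin]; omega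
    · right; exact ⟨j, ⟨hj1, hjk'⟩, h3⟩

lemma card_Imu (hmono : ∀ i j, 1 ≤ i → i ≤ j → j ≤ k → m j ≤ m i) :
    (Imu n k m).card = k := by
  unfold Imu
  rw [Finset.card_image_of_injOn, Nat.card_Icc]
  · omega
  · intro x hx y hy hxy
    simp only [Finset.mem_coe, Finset.mem_Icc] at hx hy
    by_contra hne
    rcases Nat.lt_or_ge x y with h | h
    · exact absurd hxy (Nat.ne_of_lt (bvec_lt_bvec hmono hx.1 h hy.2))
    · have h' : y < x := by omega
      exact absurd hxy.symm (Nat.ne_of_lt (bvec_lt_bvec hmono hy.1 h' hx.2))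

lemma Imu_subset (hkn : k ≤ n) : Imu n k m ⊆ Finset.Icc 1 n := by
  intro x hx
  rw [mem_Imu] at hx
  obtain ⟨j, h1, h2, rfl⟩ := hx
  exact Finset.mem_Icc.2 ⟨one_le_bvec h1, bvec_le_n h2 hkn⟩

lemma fullLabel_eq_image {a i : ℕ} (hik : i ≤ k) :
    fullLabel n k m a i =
      (Finset.Icc 1 k).image
        (fun j => if j ≤ i then min (a + j - 1) (bvec n k m j) else bvec n k m j) := by
  unfold fullLabel shortLabel
  have hsplit : Finset.Icc 1 k = Finset.Icc 1 i ∪ Finset.Icc (i + 1) k := by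
    ext x; simp only [Finset.mem_union, Finset.mem_Icc]; omega
  rw [hsplit, Finset.image_union]
  congr 1
  · apply Finset.image_congr
    intro x hx
    simp only [Finset.mem_coe, Finset.mem_Icc] at hx
    have h2 : x ≤ i := hx.2
    simp [h2]
  · apply Finset.image_congr
    intro x hx
    simp only [Finset.mem_coe, Finset.mem_Icc] at hx
    have h2 : ¬ x ≤ i := by omega
    simp [h2]

lemma card_fullLabel (hmono : ∀ i j, 1 ≤ i → i ≤ j → j ≤ k → m j ≤ m i)
    {a i : ℕ} (hik : i ≤ k) :
    (fullLabel n k m a i).card = k := by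
  rw [fullLabel_eq_image hik]
  set g : ℕ → ℕ := fun j => if j ≤ i then min (a + j - 1) (bvec n k m j) else bvec n k m j with hg
  have hlt : ∀ x y, 1 ≤ x → x < y → y ≤ k → g x < g y := by
    intro x y h1 h2 h3
    have hb := bvec_lt_bvec (n := n) hmono h1 h2 h3
    simp only [hg]
    by_cases hyi : y ≤ i
    · rw [if_pos (by omega), if_pos hyi]
      apply lt_min
      · calc min (a + x - 1) (bvec n k m x) ≤ a + x - 1 := min_le_left _ _
          _ < a + y - 1 := by omega
      · calc min (a + x - 1) (bvec n k m x) ≤ bvec n k m x := min_le_right _ _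
          _ < bvec n k m y := hb
    · rw [if_neg hyi]
      by_cases hxi : x ≤ i
      · rw [if_pos hxi]
        calc min (a + x - 1) (bvec n k m x) ≤ bvec n k m x := min_le_right _ _
          _ < bvec n k m y := hb
      · rw [if_neg hxi]; exact hb
  rw [Finset.card_image_of_injOn, Nat.card_Icc]
  · omega
  · intro x hx y hy hxy
    simp only [Finset.mem_coe, Finset.mem_Icc] at hx hy
    by_contra hne
    rcases Nat.lt_or_ge x y with h | h
    · exact absurd hxy (Nat.ne_of_lt (hlt x y hx.1 h hy.2))
    · have h' : y < x := by omega
      exact absurd hxy.symm (Nat.ne_of_lt (hlt y x hy.1 h' hx.2))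

lemma fullLabel_subset {a i : ℕ} (ha1 : 1 ≤ a) (hik : i ≤ k) (hkn : k ≤ n) :
    fullLabel n k m a i ⊆ Finset.Icc 1 n := by
  intro x hx
  unfold fullLabel shortLabel at hx
  simp only [Finset.mem_union, Finset.mem_image, Finset.mem_Icc] at hx
  rw [Finset.mem_Icc]
  rcases hx with ⟨j, ⟨hj1, hji⟩, rfl⟩ | ⟨j, ⟨hj1, hjk'⟩, rfl⟩
  · constructor
    · have h1 : 1 ≤ a + j - 1 := by omega
      have h2 := one_le_bvec (n := n) (k := k) (m := m) hj1
      omega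
    · calc min (a + j - 1) (bvec n k m j) ≤ bvec n k m j := min_le_right _ _
        _ ≤ n := bvec_le_n (le_trans hji hik) hkn
  · exact ⟨one_le_bvec (by omega), bvec_le_n hjk' hkn⟩

end Mem

section Exch

variable {n k : ℕ} {m : ℕ → ℕ}

lemma bvec_lt_of_le_col (hmono : ∀ i j, 1 ≤ i → i ≤ j → j ≤ k → m j ≤ m i)
    {a j : ℕ} (ha1 : 1 ≤ a) (hj1 : 1 ≤ j) (hjc : j ≤ colHeight n k m a) :
    bvec n k m j + 1 ≤ a + j := by
  have hjk : j ≤ k := hjc.trans colHeight_le_k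
  have hm : n - k - a + 1 ≤ m j := (le_colHeight_iff hmono hj1 hjk).1 hjc
  unfold bvec; omega

lemma bvec_ge_of_col_lt (hmono : ∀ i j, 1 ≤ i → i ≤ j → j ≤ k → m j ≤ m i)
    {a j : ℕ} (han : a ≤ n - k) (hjc : colHeight n k m a < j) (hjk : j ≤ k) :
    a + j ≤ bvec n k m j := by
  have hm : ¬ (n - k - a + 1 ≤ m j) := by
    intro h
    exact absurd ((le_colHeight_iff hmono (by omega) hjk).2 h) (by omega)
  unfold bvec; omega

lemma bvec_eq_of_between (hmono : ∀ i j, 1 ≤ i → i ≤ j → j ≤ k → m j ≤ m i)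
    {a j : ℕ} (han : a + 1 ≤ n - k) (h1 : colHeight n k m a < j)
    (h2 : j ≤ colHeight n k m (a + 1)) :
    bvec n k m j = a + j := by
  have hjk : j ≤ k := h2.trans colHeight_le_k
  have hm1 : ¬ (n - k - a + 1 ≤ m j) := by
    intro h
    exact absurd ((le_colHeight_iff hmono (by omega) hjk).2 h) (by omega)
  have hm2 : n - k - (a + 1) + 1 ≤ m j := (le_colHeight_iff hmono (by omega) hjk).1 h2
  unfold bvec; omega

lemma mem_fullLabel_self (hmono : ∀ i j, 1 ≤ i → i ≤ j → j ≤ k → m j ≤ m i)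
    {a i : ℕ} (ha1 : 1 ≤ a) (han : a ≤ n - k)
    (hci : colHeight n k m a < i) (hik : i ≤ k) :
    a + i - 1 ∈ fullLabel n k m a i := by
  rw [mem_fullLabel hmono ha1 han hci hik]
  right; left; omega

lemma exchange_col (hmono : ∀ i j, 1 ≤ i → i ≤ j → j ≤ k → m j ≤ m i)
    {a i : ℕ} (ha1 : 1 ≤ a) (han : a ≤ n - k)
    (hci : colHeight n k m a < i) (hik : i + 1 ≤ k) :
    fullLabel n k m a i = insert (bvec n k m (i + 1)) (fullLabel n k m a (i + 1) \ {a + i}) := by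
  ext x
  rw [mem_fullLabel hmono ha1 han hci (by omega)]
  simp only [Finset.mem_insert, Finset.mem_sdiff, Finset.mem_singleton,
    mem_fullLabel hmono ha1 han (by omega : colHeight n k m a < i + 1) (by omega)]
  set c := colHeight n k m a with hc
  constructor
  · rintro (⟨j, h1, h2, rfl⟩ | ⟨h1, h2⟩ | ⟨j, h1, h2, rfl⟩)
    · right
      have := bvec_lt_of_le_col hmono ha1 h1 h2
      exact ⟨Or.inl ⟨j, h1, h2, rfl⟩, by omega⟩
    · right
      exact ⟨Or.inr (Or.inl ⟨by omega, by omega⟩), by omega⟩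
    · by_cases hj : j = i + 1
      · subst hj; left; rfl
      · right
        have := bvec_ge_of_col_lt hmono han (show c < j by omega) h2
        exact ⟨Or.inr (Or.inr ⟨j, by omega, h2, rfl⟩), by omega⟩
  · rintro (rfl | ⟨(⟨j, h1, h2, rfl⟩ | ⟨h1, h2⟩ | ⟨j, h1, h2, rfl⟩), hne⟩)
    · right; right; exact ⟨i + 1, le_refl _, hik, rfl⟩
    · left; exact ⟨j, h1, h2, rfl⟩
    · right; left; exact ⟨h1, by omega⟩
    · right; right; exact ⟨j, by omega, h2, rfl⟩

lemma exchange_row (hmono : ∀ i j, 1 ≤ i → i ≤ j → j ≤ k → m j ≤ m i)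
    {a i : ℕ} (ha1 : 1 ≤ a) (han : a + 1 ≤ n - k)
    (hci : colHeight n k m a < i) (hci' : colHeight n k m (a + 1) < i) (hik : i ≤ k) :
    fullLabel n k m a i
      = insert (a + colHeight n k m a) (fullLabel n k m (a + 1) i \ {a + i}) := by
  ext x
  rw [mem_fullLabel hmono ha1 (by omega) hci hik]
  simp only [Finset.mem_insert, Finset.mem_sdiff, Finset.mem_singleton,
    mem_fullLabel hmono (by omega : 1 ≤ a + 1) han hci' hik]
  set c := colHeight n k m a with hc
  set c' := colHeight n k m (a + 1) with hc'
  have hcc' : c ≤ c' := colHeight_mono (by omega)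
  have hmid : ∀ j, c < j → j ≤ c' → bvec n k m j = a + j := fun j h1 h2 =>
    bvec_eq_of_between hmono han h1 h2
  constructor
  · rintro (⟨j, h1, h2, rfl⟩ | ⟨h1, h2⟩ | ⟨j, h1, h2, rfl⟩)
    · right
      have := bvec_lt_of_le_col hmono ha1 h1 h2
      exact ⟨Or.inl ⟨j, h1, by omega, rfl⟩, by omega⟩
    · by_cases hx : x = a + c
      · left; exact hx
      · right
        refine ⟨?_, by omega⟩
        by_cases hx2 : x ≤ a + c'
        · left
          refine ⟨x - a, by omega, by omega, ?_⟩
          rw [hmid (x - a) (by omega) (by omega)]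
          omega
        · right; left; exact ⟨by omega, by omega⟩
    · right
      have := bvec_ge_of_col_lt hmono han (show c' < j by omega) h2
      exact ⟨Or.inr (Or.inr ⟨j, h1, h2, rfl⟩), by omega⟩
  · rintro (rfl | ⟨(⟨j, h1, h2, rfl⟩ | ⟨h1, h2⟩ | ⟨j, h1, h2, rfl⟩), hne⟩)
    · right; left; exact ⟨le_refl _, by omega⟩
    · by_cases hj : j ≤ c
      · left; exact ⟨j, h1, hj, rfl⟩
      · right; left
        rw [hmid j (by omega) h2]
        omega
    · right; left; exact ⟨by omega, by omega⟩
    · right; right; exact ⟨j, h1, h2, rfl⟩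

lemma exchange_start (hmono : ∀ i j, 1 ≤ i → i ≤ j → j ≤ k → m j ≤ m i)
    {a i : ℕ} (ha1 : 1 ≤ a) (han : a ≤ n - k)
    (hie : i = colHeight n k m a + 1) (hik : i ≤ k) :
    Imu n k m = insert (bvec n k m i) (fullLabel n k m a i \ {a + i - 1}) := by
  ext x
  rw [mem_Imu]
  simp only [Finset.mem_insert, Finset.mem_sdiff, Finset.mem_singleton,
    mem_fullLabel hmono ha1 han (show colHeight n k m a < i by omega) hik]
  set c := colHeight n k m a with hc
  constructor
  · rintro ⟨j, h1, h2, rfl⟩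
    rcases Nat.lt_trichotomy j i with h | h | h
    · right
      have := bvec_lt_of_le_col hmono ha1 h1 (show j ≤ c by omega)
      exact ⟨Or.inl ⟨j, h1, by omega, rfl⟩, by omega⟩
    · left; rw [h]
    · right
      have := bvec_ge_of_col_lt hmono han (show c < j by omega) h2
      exact ⟨Or.inr (Or.inr ⟨j, by omega, h2, rfl⟩), by omega⟩
  · rintro (rfl | ⟨(⟨j, h1, h2, rfl⟩ | ⟨h1, h2⟩ | ⟨j, h1, h2, rfl⟩), hne⟩)
    · exact ⟨i, by omega, hik, rfl⟩
    · exact ⟨j, h1, by omega, rfl⟩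
    · exfalso; omega
    · exact ⟨j, by omega, h2, rfl⟩

lemma exchange_end (hmono : ∀ i j, 1 ≤ i → i ≤ j → j ≤ k → m j ≤ m i)
    {a i : ℕ} (ha1 : 1 ≤ a) (han : a ≤ n - k)
    (hci : colHeight n k m a < i) (hik : i ≤ k)
    (hm : ∀ j, colHeight n k m a < j → j ≤ i → m j = n - k - a) :
    fullLabel n k m a i = insert (a + colHeight n k m a) (Imu n k m \ {a + i}) := by
  have hmid : ∀ j, colHeight n k m a < j → j ≤ i → bvec n k m j = a + j := by
    intro j h1 h2
    have := hm j h1 h2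
    unfold bvec; omega
  ext x
  rw [mem_fullLabel hmono ha1 han hci hik]
  simp only [Finset.mem_insert, Finset.mem_sdiff, Finset.mem_singleton, mem_Imu]
  set c := colHeight n k m a with hc
  constructor
  · rintro (⟨j, h1, h2, rfl⟩ | ⟨h1, h2⟩ | ⟨j, h1, h2, rfl⟩)
    · right
      have := bvec_lt_of_le_col hmono ha1 h1 h2
      exact ⟨⟨j, h1, by omega, rfl⟩, by omega⟩
    · by_cases hx : x = a + c
      · left; exact hx
      · right
        refine ⟨⟨x - a, by omega, by omega, ?_⟩, by omega⟩
        rw [hmid (x - a) (by omega) (by omega)]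
        omega
    · right
      have := bvec_ge_of_col_lt hmono han (show c < j by omega) h2
      exact ⟨⟨j, by omega, h2, rfl⟩, by omega⟩
  · rintro (rfl | ⟨⟨j, h1, h2, rfl⟩, hne⟩)
    · right; left; exact ⟨le_refl _, by omega⟩
    · rcases Nat.lt_or_ge c j with h | h
      · rcases Nat.lt_or_ge i j with h' | h'
        · right; right; exact ⟨j, by omega, h2, rfl⟩
        · right; left
          rw [hmid j h h']
          have hji : j ≠ i := by
            intro hji
            apply hne
            rw [hji, hmid i hci (le_refl _)]
          omega
      · left; exact ⟨j, h1, h, rfl⟩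

lemma bvec_end_mem {a i : ℕ}
    (hci : colHeight n k m a < i) (hik : i ≤ k) (h1 : 1 ≤ i)
    (hm : ∀ j, colHeight n k m a < j → j ≤ i → m j = n - k - a) (han : a ≤ n - k) :
    a + i ∈ Imu n k m := by
  rw [mem_Imu]
  refine ⟨i, h1, hik, ?_⟩
  have := hm i hci (le_refl _)
  unfold bvec; omega

end Exch

section Rib

variable {n k : ℕ} {l m : ℕ → ℕ}

lemma adjacency {a i a' i' : ℕ}
    (h : InRibbon n k l m a i) (h' : InRibbon n k l m a' i')
    (hsum : a' + i' = a + i + 1) :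
    (a' = a ∧ i' = i + 1) ∨ (a' = a + 1 ∧ i' = i) := by
  obtain ⟨⟨ha1, han, hi1, hik, hmi, hil⟩, hrib⟩ := h
  obtain ⟨⟨ha1', han', hi1', hik', hmi', hil'⟩, hrib'⟩ := h'
  rcases Nat.lt_trichotomy a' a with hlt | heq | hgt
  · exfalso
    have hr : colHeight n k l (a - 1) ≤ i := by
      rcases hrib with h | h
      · omega
      · exact h
    have h1 : colHeight n k l a' ≤ colHeight n k l (a - 1) := colHeight_mono (by omega)
    omega
  · left; exact ⟨heq, by omega⟩
  · rcases Nat.eq_or_lt_of_le hgt with heq | hgt2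
    · right; exact ⟨heq.symm, by omega⟩
    · exfalso
      have hr' : colHeight n k l (a' - 1) ≤ i' := by
        rcases hrib' with h | h
        · omega
        · exact h
      have h1 : colHeight n k l a ≤ colHeight n k l (a' - 1) := colHeight_mono (by omega)
      omega

lemma start_col {a i : ℕ} (h : InRibbon n k l m a i)
    (hno : ∀ a' i', InRibbon n k l m a' i' → a' + i' - 1 ≠ a + i - 2) :
    i = colHeight n k m a + 1 := by
  obtain ⟨⟨ha1, han, hi1, hik, hmi, hil⟩, hrib⟩ := h
  by_contra hne
  have hi2 : colHeight n k m a + 2 ≤ i := by omega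
  by_cases hcase : a = 1 ∨ colHeight n k l (a - 1) ≤ i - 1
  · exact hno a (i - 1)
      ⟨⟨ha1, han, by omega, by omega, by omega, by omega⟩, hcase⟩ (by omega)
  · push_neg at hcase
    obtain ⟨ha2, hgt⟩ := hcase
    have hla1 : colHeight n k l (a - 1) ≤ i := by
      rcases hrib with h | h
      · exact absurd h ha2
      · exact h
    have hmla : colHeight n k m (a - 1) ≤ colHeight n k m a := colHeight_mono (by omega)
    have hlla : colHeight n k l (a - 1 - 1) ≤ colHeight n k l (a - 1) := colHeight_mono (by omega)
    exact hno (a - 1) i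
      ⟨⟨by omega, by omega, hi1, hik, by omega, by omega⟩, Or.inr (by omega)⟩ (by omega)

lemma end_struct (hmmono : ∀ i j, 1 ≤ i → i ≤ j → j ≤ k → m j ≤ m i)
    {a i : ℕ} (h : InRibbon n k l m a i)
    (hno : ∀ a' i', InRibbon n k l m a' i' → a' + i' - 1 ≠ a + i) :
    ∀ j, colHeight n k m a < j → j ≤ i → m j = n - k - a := by
  obtain ⟨⟨ha1, han, hi1, hik, hmi, hil⟩, hrib⟩ := h
  have hilam : i = colHeight n k l a := by
    by_contra hne
    have hlt : i + 1 ≤ colHeight n k l a := by omega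
    have hk1 : i + 1 ≤ k := hlt.trans colHeight_le_k
    have hribnew : a = 1 ∨ colHeight n k l (a - 1) ≤ i + 1 := by
      rcases hrib with h | h
      · exact Or.inl h
      · exact Or.inr (by omega)
    exact hno a (i + 1)
      ⟨⟨ha1, han, by omega, hk1, by omega, hlt⟩, hribnew⟩ (by omega)
  intro j hj1 hj2
  have hjk : j ≤ k := hj2.trans hik
  have hupper : ¬ (n - k - a + 1 ≤ m j) := by
    intro hcon
    have := (le_colHeight_iff hmmono (by omega) hjk).2 hcon
    omega
  by_cases hana : a = n - k
  · omega
  · have han1 : a + 1 ≤ n - k := by omega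
    have hiμ : i ≤ colHeight n k m (a + 1) := by
      by_contra hgt
      push_neg at hgt
      have hl1' : i ≤ colHeight n k l (a + 1) := by
        have := colHeight_mono (n := n) (k := k) (f := l) (show a ≤ a + 1 by omega)
        omega
      exact hno (a + 1) i
        ⟨⟨by omega, han1, hi1, hik, hgt, hl1'⟩,
          Or.inr (by simp only [Nat.add_sub_cancel]; omega)⟩ (by omega)
    have hlow : n - k - (a + 1) + 1 ≤ m j :=
      (le_colHeight_iff hmmono (by omega) hjk).1 (by omega)
    omega

end Rib

theorem stmt7 (n k : ℕ) (l m : ℕ → ℕ)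
    (hk : 0 < k) (hkn : k < n)
    (hlmono : ∀ i j, 1 ≤ i → i ≤ j → j ≤ k → l j ≤ l i)
    (hl1 : l 1 ≤ n - k)
    (hmmono : ∀ i j, 1 ≤ i → i ≤ j → j ≤ k → m j ≤ m i)
    (hml : ∀ i, 1 ≤ i → i ≤ k → m i ≤ l i)
    (N : ℕ → Finset ℕ)
    (hNper : ∀ r, N (r + n) = N r)
    (hNrib : ∀ a i, InRibbon n k l m a i → N (a + i - 1) = fullLabel n k m a i)
    (hNmu : ∀ r ∈ Finset.Icc 1 n,
      (¬ ∃ a i, InRibbon n k l m a i ∧ r = a + i - 1) → N r = Imu n k m) :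
    (∀ r ∈ Finset.Icc 1 n, (N r).card = k ∧ N r ⊆ Finset.Icc 1 n) ∧
    IsSourceGN n k N := by
  have hkn' : k ≤ n := le_of_lt hkn
  have hpos : ∀ a i, InRibbon n k l m a i →
      1 ≤ a ∧ a ≤ n - k ∧ 1 ≤ i ∧ i ≤ k ∧ colHeight n k m a < i :=
    fun a i h => ⟨h.1.1, h.1.2.1, h.1.2.2.1, h.1.2.2.2.1, h.1.2.2.2.2.1⟩
  have part1 : ∀ r ∈ Finset.Icc 1 n, (N r).card = k ∧ N r ⊆ Finset.Icc 1 n := by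
    intro r hr
    by_cases hrib : ∃ a i, InRibbon n k l m a i ∧ r = a + i - 1
    · obtain ⟨a, i, hri, rfl⟩ := hrib
      rw [hNrib a i hri]
      obtain ⟨ha1, han, hi1, hik, hci⟩ := hpos a i hri
      exact ⟨card_fullLabel hmmono hik, fullLabel_subset ha1 hik hkn'⟩
    · rw [hNmu r hr hrib]
      exact ⟨card_Imu hmmono, Imu_subset hkn'⟩
  refine ⟨part1, hNper, part1, ?_⟩
  intro r hr
  rw [Finset.mem_Icc] at hr
  have hN0 : N 0 = Imu n k m := by
    have hNn : ¬ ∃ a i, InRibbon n k l m a i ∧ n = a + i - 1 := by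
      rintro ⟨a, i, hri, hp⟩
      obtain ⟨ha1, han, hi1, hik, hci⟩ := hpos a i hri
      omega
    have h1 : N n = N 0 := by simpa using hNper 0
    have h2 := hNmu n (Finset.mem_Icc.2 ⟨by omega, le_refl n⟩) hNn
    rw [← h1, h2]
  by_cases hribr : ∃ a i, InRibbon n k l m a i ∧ r = a + i - 1
  · obtain ⟨a', i', hri', hreq⟩ := hribr
    obtain ⟨ha1', han', hi1', hik', hci'⟩ := hpos a' i' hri'
    have hNr : N r = fullLabel n k m a' i' := by rw [hreq]; exact hNrib a' i' hri'
    have hrmem : r ∈ N r := by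
      rw [hNr, hreq]
      exact mem_fullLabel_self hmmono ha1' han' hci' hik'
    refine ⟨fun _ => ?_, fun h => absurd hrmem h⟩
    by_cases hribr1 : ∃ a i, InRibbon n k l m a i ∧ r - 1 = a + i - 1
    · -- adjacent ribbon boxes
      obtain ⟨a, i, hri, hreq1⟩ := hribr1
      obtain ⟨ha1, han, hi1, hik, hci⟩ := hpos a i hri
      have hsum : a' + i' = a + i + 1 := by omega
      have hNr1 : N (r - 1) = fullLabel n k m a i := by rw [hreq1]; exact hNrib a i hri
      rcases adjacency hri hri' hsum with ⟨haa, hii⟩ | ⟨haa, hii⟩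
      · subst haa; subst hii
        refine ⟨bvec n k m (i + 1), Finset.mem_Icc.2
          ⟨one_le_bvec (by omega), bvec_le_n (by omega) hkn'⟩, ?_⟩
        have hra : r = a' + i := by omega
        rw [hNr1, hNr, hra]
        exact exchange_col hmmono ha1 han hci hik'
      · subst haa; subst hii
        refine ⟨a + colHeight n k m a, Finset.mem_Icc.2 ⟨by omega, by omega⟩, ?_⟩
        have hra : r = a + i' := by omega
        rw [hNr1, hNr, hra]
        exact exchange_row hmmono ha1 han' hci hci' hik'
    · -- start of a ribbon segment
      have hstart : i' = colHeight n k m a' + 1 := by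
        apply start_col hri'
        intro a'' i'' h'' heq
        obtain ⟨ha1'', han'', hi1'', hik'', hci''⟩ := hpos a'' i'' h''
        exact hribr1 ⟨a'', i'', h'', by omega⟩
      have hNr1 : N (r - 1) = Imu n k m := by
        rcases Nat.eq_or_lt_of_le hr.1 with h1 | h1
        · rw [← h1]; exact hN0
        · exact hNmu (r - 1) (Finset.mem_Icc.2 ⟨by omega, by omega⟩) hribr1
      refine ⟨bvec n k m i', Finset.mem_Icc.2
        ⟨one_le_bvec hi1', bvec_le_n hik' hkn'⟩, ?_⟩
      rw [hNr1, hNr, hreq]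
      exact exchange_start hmmono ha1' han' hstart hik'
  · -- r is not a ribbon position
    have hNr : N r = Imu n k m := hNmu r (Finset.mem_Icc.2 hr) hribr
    by_cases hribr1 : ∃ a i, InRibbon n k l m a i ∧ r - 1 = a + i - 1
    · -- end of a ribbon segment
      obtain ⟨a, i, hri, hreq1⟩ := hribr1
      obtain ⟨ha1, han, hi1, hik, hci⟩ := hpos a i hri
      have hrfl : r = a + i := by omega
      have hend : ∀ j, colHeight n k m a < j → j ≤ i → m j = n - k - a := by
        apply end_struct hmmono hri
        intro a'' i'' h'' heq
        obtain ⟨ha1'', han'', hi1'', hik'', hci''⟩ := hpos a'' i'' h''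
        exact hribr ⟨a'', i'', h'', by omega⟩
      have hNr1 : N (r - 1) = fullLabel n k m a i := by rw [hreq1]; exact hNrib a i hri
      constructor
      · intro _
        refine ⟨a + colHeight n k m a, Finset.mem_Icc.2 ⟨by omega, by omega⟩, ?_⟩
        rw [hNr1, hNr, hrfl]
        exact exchange_end hmmono ha1 han hci hik hend
      · intro hmem
        exfalso
        apply hmem
        rw [hNr, hrfl]
        exact bvec_end_mem hci hik hi1 hend han
    · -- both positions outside the ribbon
      have hNr1 : N (r - 1) = Imu n k m := by
        rcases Nat.eq_or_lt_of_le hr.1 with h1 | h1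
        · rw [← h1]; exact hN0
        · exact hNmu (r - 1) (Finset.mem_Icc.2 ⟨by omega, by omega⟩) hribr1
      constructor
      · intro hmem
        rw [hNr] at hmem
        refine ⟨r, Finset.mem_Icc.2 hr, ?_⟩
        rw [hNr1, hNr, Finset.sdiff_singleton_eq_erase, Finset.insert_erase hmem]
      · intro _
        rw [hNr1, hNr]
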